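/- Let f: R^p → R be C³ with ∇f(θ*) = 0, and suppose H v ≠ 0 where H = ∇²f(θ*) and v ∈ R^p. Then as ε → 0, with g(ε) = ∇f(θ* + εv), we have π(Hv; g(ε)) → 0, where π(u; w) = u - (⟨u, w⟩/‖w‖²) w. -/

import Mathlib

open RealInnerProductSpace Filter Topology

section VectorRejection

variable {E : Type*} [NormedAddCommGroup E] [InnerProductSpace ℝ E]

/-- The paper's `π(u; w)`. For `w = 0` the junk value `0 / 0 = 0` makes it `u`. -/
noncomputable def vectorRejection (u w : E) : E :=
  u - (⟪u, w⟫ / ‖w‖ ^ 2) • w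

theorem vectorRejection_self (u : E) : vectorRejection u u = 0 := by
  rcases eq_or_ne u 0 with rfl | hu
  · simp [vectorRejection]
  · have hu2 : ‖u‖ ^ 2 ≠ 0 := pow_ne_zero _ (norm_ne_zero_iff.mpr hu)
    rw [vectorRejection, real_inner_self_eq_norm_sq, div_self hu2, one_smul, sub_self]

theorem vectorRejection_smul_right (u w : E) {c : ℝ} (hc : c ≠ 0) :
    vectorRejection u (c • w) = vectorRejection u w := by
  rcases eq_or_ne w 0 with rfl | hw
  · simp
  have hw2 : ‖w‖ ^ 2 ≠ 0 := pow_ne_zero _ (norm_ne_zero_iff.mpr hw)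
  simp only [vectorRejection, real_inner_smul_right, norm_smul, Real.norm_eq_abs, mul_pow,
    sq_abs, smul_smul]
  congr 2
  field_simp

theorem continuousAt_vectorRejection (u : E) {w : E} (hw : w ≠ 0) :
    ContinuousAt (vectorRejection u) w := by
  have hw2 : ‖w‖ ^ 2 ≠ 0 := pow_ne_zero _ (norm_ne_zero_iff.mpr hw)
  unfold vectorRejection
  fun_prop (disch := exact hw2)

/-- Rescaling by `(t - x)⁻¹` does not change the rejection and turns `φ t` into the difference
quotient, which tends to `d`, and `d` rejects itself. -/
theorem tendsto_vectorRejection_of_hasDerivAt {φ : ℝ → E} {d : E} {x : ℝ}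
    (hφ : HasDerivAt φ d x) (hx : φ x = 0) (hd : d ≠ 0) :
    Tendsto (fun t => vectorRejection d (φ t)) (𝓝[≠] x) (𝓝 0) := by
  have hslope : Tendsto (slope φ x) (𝓝[≠] x) (𝓝 d) := hasDerivAt_iff_tendsto_slope.mp hφ
  have hlim : Tendsto (vectorRejection d ∘ slope φ x) (𝓝[≠] x) (𝓝 0) := by
    simpa only [vectorRejection_self] using
      (continuousAt_vectorRejection d hd).tendsto.comp hslope
  refine hlim.congr' ?_
  filter_upwards [self_mem_nhdsWithin] with t (ht : t ≠ x)
  rw [Function.comp_apply, slope_def_module, hx, sub_zero,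
    vectorRejection_smul_right _ _ (inv_ne_zero (sub_ne_zero.mpr ht))]

end VectorRejection

theorem ContDiff.differentiable_gradient {E : Type*} [NormedAddCommGroup E]
    [InnerProductSpace ℝ E] [CompleteSpace E] {f : E → ℝ} {n : WithTop ℕ∞}
    (hf : ContDiff ℝ n f) (hn : 2 ≤ n) : Differentiable ℝ (gradient f) := by
  have hfderiv : Differentiable ℝ (fderiv ℝ f) :=
    (hf.fderiv_right (m := 1) (by simpa [one_add_one_eq_two] using hn)).differentiable
      one_ne_zero
  exact (InnerProductSpace.toDual ℝ E).symm.toContinuousLinearEquiv.differentiable.comp hfderiv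

theorem bloop_projection_vanishes_near_stationary (p : ℕ)
    (f : EuclideanSpace ℝ (Fin p) → ℝ) (hC3 : ContDiff ℝ 3 f)
    (θs v : EuclideanSpace ℝ (Fin p)) (hcrit : gradient f θs = 0)
    (Hv : EuclideanSpace ℝ (Fin p)) (hHv : Hv = fderiv ℝ (gradient f) θs v)
    (hHv0 : Hv ≠ 0) :
    Tendsto (fun ε : ℝ =>
        Hv - (⟪Hv, gradient f (θs + ε • v)⟫ / ‖gradient f (θs + ε • v)‖ ^ 2) •
          gradient f (θs + ε • v))
      (nhdsWithin 0 {0}ᶜ) (nhds 0) := by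
  have hline : HasDerivAt (fun ε : ℝ => θs + ε • v) v 0 :=
    ((hasDerivAt_id 0).smul_const v).const_add θs |>.congr_deriv (one_smul ℝ v)
  have hgrad : HasFDerivAt (gradient f) (fderiv ℝ (gradient f) θs) (θs + (0 : ℝ) • v) := by
    rw [zero_smul, add_zero]
    exact (hC3.differentiable_gradient (by norm_num) θs).hasFDerivAt
  have hφ : HasDerivAt (fun ε : ℝ => gradient f (θs + ε • v)) Hv 0 := by
    rw [hHv]
    exact hgrad.comp_hasDerivAt 0 hline
  exact tendsto_vectorRejection_of_hasDerivAt hφ (by simpa using hcrit) hHv0
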